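/- arXiv:1109.2763 — 3 statements merged into one kernel-verified Lean document; each statement's English description precedes it below -/
import Mathlib

section
/- Let N ≥ 3 and let ℓ : Fin N → Fin N be a bijection (indices taken as 1,…,N) satisfying: for all k, k' in {1,…,N}, if k' ≥ k − 1 then ℓ(k') ≥ ℓ(k) − 1. Then ℓ is the identity. -/
/-!
Counting the indices `≥ k - 1`, which `ℓ` maps injectively into the indices `≥ ℓ(k) - 1`, gives
`ℓ(k) - 1 ≤ k - 1` for every `k`. Since `ℓ` is a permutation, `∑ (ℓ(k) - 1) = ∑ (k - 1)`, so these
inequalities are equalities: `ℓ` fixes every index `≥ 2` and permutes `{0, 1}`. The transposition of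
`0` and `1` violates the hypothesis at `k = 2`, `k' = 1`.
-/

open Finset

theorem Equiv.Perm.comp_eq_of_comp_le {α M : Type*} [Fintype α] [AddCommMonoid M] [PartialOrder M]
    [IsOrderedCancelAddMonoid M] (σ : Equiv.Perm α) {f : α → M} (hf : f ∘ σ ≤ f) : f ∘ σ = f := by
  funext a
  have hsum : ∑ x, f (σ x) = ∑ x, f x := Equiv.sum_comp σ f
  exact (sum_eq_sum_iff_of_le fun x _ ↦ hf x).1 hsum a (mem_univ a)

theorem Fin.le_of_injective_of_forall_le {N : ℕ} {f : Fin N → Fin N} (hf : Function.Injective f)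
    {a b : Fin N} (h : ∀ x, a ≤ x → b ≤ f x) : b ≤ a := by
  have hcard := card_le_card_of_injOn f (s := Ici a) (t := Ici b)
    (fun x hx ↦ mem_Ici.2 (h x (mem_Ici.1 hx))) hf.injOn
  rw [Fin.card_Ici, Fin.card_Ici] at hcard
  have := a.isLt
  exact Fin.le_def.2 (by omega)

/-- If `ℓ` is a permutation of the indices `1,…,N` (here coded by `Fin N`, index
`k` standing for the number `(k : ℕ) + 1`) with `N ≥ 3` such that
`k' ≥ k - 1 → ℓ(k') ≥ ℓ(k) - 1` for all `k, k'`, then `ℓ` is the identity. -/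
theorem perm_step_condition_identity (N : ℕ) (hN : 3 ≤ N) (ℓ : Equiv.Perm (Fin N))
    (h : ∀ k k' : Fin N, (k' : ℕ) + 1 ≥ (k : ℕ) → (ℓ k' : ℕ) + 1 ≥ (ℓ k : ℕ)) :
    ℓ = Equiv.refl (Fin N) := by
  have hpred_le : ∀ k : Fin N, (ℓ k : ℕ) - 1 ≤ k - 1 := fun k ↦ by
    have := Fin.le_of_injective_of_forall_le ℓ.injective
      (a := ⟨k - 1, by omega⟩) (b := ⟨ℓ k - 1, by omega⟩)
      (fun x hx ↦ by have := h k x; simp only [Fin.le_def] at *; omega)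
    simpa only [Fin.le_def] using this
  have hpred : ∀ k : Fin N, (ℓ k : ℕ) - 1 = k - 1 :=
    congrFun (ℓ.comp_eq_of_comp_le (f := fun k : Fin N ↦ (k : ℕ) - 1) hpred_le)
  have h1 : (ℓ ⟨1, by omega⟩ : ℕ) = 1 := by
    have h1_le := hpred ⟨1, by omega⟩
    have h2_eq := hpred ⟨2, by omega⟩
    have h21 := h ⟨2, by omega⟩ ⟨1, by omega⟩ le_rfl
    simp only at h1_le h2_eq h21
    omega
  ext k
  rcases eq_or_ne k ⟨1, by omega⟩ with rfl | hk1
  · exact h1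
  · have hk := hpred k
    have hℓk1 : (ℓ k : ℕ) ≠ 1 := fun heq ↦ hk1 (ℓ.injective (Fin.ext (heq.trans h1.symm)))
    replace hk1 : (k : ℕ) ≠ 1 := fun heq ↦ hk1 (Fin.ext heq)
    simp only [Equiv.refl_apply]
    omega
end

section
/- Let N ≥ 8 and let ℓ be a permutation of {1,…,N} that maps even numbers to even numbers and odd numbers to odd numbers, and satisfies: whenever k and ℓ(k) are even, k' and ℓ(k') are odd, and k' ≥ k + 3, then ℓ(k') ≥ ℓ(k) + 3; and the same condition holds with ℓ replaced by ℓ⁻¹. Then ℓ fixes every even number except possibly interchanging the two even numbers among {N−3, N−2, N−1, N}, and fixes every odd number except possibly interchanging 1 and 3. In particular there are at most 4 such permutations ℓ. -/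
/-!
Because `ℓ` preserves parity and is injective, it maps the odd numbers `≥ k + 3` above an even
`k` into the odd numbers `≥ ℓ(k) + 3`, so counting forces `ℓ(k) ≤ k`; the same argument for `ℓ⁻¹`
gives `ℓ(k) = k` as soon as `k + 3 ≤ N`. Dually, counting the even numbers `≤ k - 3` below an
odd `k ≥ 5` gives `ℓ(k) = k`. Hence `ℓ` can only permute `{1, 3}` and the two largest even
numbers among themselves, and it is determined by whether it fixes `1` and the largest even number.
-/

namespace Equiv.Perm

variable {α : Type*}

theorem not_mapsTo_of_ssubset (σ : Perm α) {s t : Finset α} (hts : t ⊂ s) :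
    ¬ Set.MapsTo σ s t := fun h =>
  (Finset.card_le_card_of_injOn σ h σ.injective.injOn).not_gt (Finset.card_lt_card hts)

theorem apply_eq_of_mapsTo_pair {σ τ : Perm α} {x y : α}
    (hσ : ∀ z, z = x ∨ z = y → σ z = x ∨ σ z = y)
    (hτ : ∀ z, z = x ∨ z = y → τ z = x ∨ τ z = y) (hx : σ x = x ↔ τ x = x)
    {z : α} (hz : z = x ∨ z = y) : σ z = τ z := by
  have := σ.injective.eq_iff (a := x) (b := y)
  have := τ.injective.eq_iff (a := x) (b := y)
  grind

end Equiv.Perm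

variable {N : ℕ}

def ParityPreserving (ℓ : Equiv.Perm (Fin N)) : Prop :=
  ∀ k : Fin N, ((ℓ k : ℕ) + 1) % 2 = ((k : ℕ) + 1) % 2

def StaircaseMonotone (ℓ : Equiv.Perm (Fin N)) : Prop :=
  ∀ k k' : Fin N, Even ((k : ℕ) + 1) → Odd ((k' : ℕ) + 1) →
    (k' : ℕ) + 1 ≥ (k : ℕ) + 1 + 3 → (ℓ k' : ℕ) + 1 ≥ (ℓ k : ℕ) + 1 + 3

def IsStaircasePerm (ℓ : Equiv.Perm (Fin N)) : Prop :=
  ParityPreserving ℓ ∧ StaircaseMonotone ℓ ∧ StaircaseMonotone ℓ.symm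

variable {ℓ : Equiv.Perm (Fin N)}

theorem ParityPreserving.symm (h : ParityPreserving ℓ) : ParityPreserving ℓ.symm := fun k => by
  simpa using (h (ℓ.symm k)).symm

theorem IsStaircasePerm.symm (h : IsStaircasePerm ℓ) : IsStaircasePerm ℓ.symm :=
  ⟨h.1.symm, h.2.2, h.2.1⟩

theorem StaircaseMonotone.val_apply_le_of_even (hp : ParityPreserving ℓ)
    (hs : StaircaseMonotone ℓ) {k : Fin N} (hk : Even ((k : ℕ) + 1)) (hkN : (k : ℕ) + 4 ≤ N) :
    (ℓ k : ℕ) ≤ k := by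
  by_contra! hlt
  have hpk := hp k
  rw [Nat.even_iff] at hk
  refine ℓ.not_mapsTo_of_ssubset (s := {x | Odd ((x : ℕ) + 1) ∧ (k : ℕ) + 3 ≤ x})
    (t := {x | Odd ((x : ℕ) + 1) ∧ (ℓ k : ℕ) + 3 ≤ x}) ?_ fun x hx => ?_
  · refine Finset.ssubset_iff_of_subset (fun x hx => ?_) |>.2 ⟨⟨k + 3, by omega⟩, ?_⟩
    · simp only [Finset.mem_filter, Finset.mem_univ, true_and] at hx ⊢
      exact ⟨hx.1, by omega⟩
    · simp only [Finset.mem_filter, Finset.mem_univ, true_and, Nat.odd_iff]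
      omega
  · simp only [Finset.coe_filter, Finset.mem_univ, true_and, Set.mem_ofPred_eq] at hx ⊢
    refine ⟨?_, by have := hs k x (Nat.even_iff.2 hk) hx.1 (by omega); omega⟩
    rw [Nat.odd_iff, hp x, ← Nat.odd_iff]
    exact hx.1

theorem StaircaseMonotone.le_val_apply_of_odd (hp : ParityPreserving ℓ)
    (hs : StaircaseMonotone ℓ) {k : Fin N} (hk : Odd ((k : ℕ) + 1)) (hk4 : 4 ≤ (k : ℕ)) :
    (k : ℕ) ≤ ℓ k := by
  by_contra! hlt
  have hpk := hp k
  rw [Nat.odd_iff] at hk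
  refine ℓ.not_mapsTo_of_ssubset (s := {x | Even ((x : ℕ) + 1) ∧ (x : ℕ) + 3 ≤ k})
    (t := {x | Even ((x : ℕ) + 1) ∧ (x : ℕ) + 3 ≤ ℓ k}) ?_ fun x hx => ?_
  · refine Finset.ssubset_iff_of_subset (fun x hx => ?_) |>.2 ⟨⟨k - 3, by omega⟩, ?_⟩
    · simp only [Finset.mem_filter, Finset.mem_univ, true_and] at hx ⊢
      exact ⟨hx.1, by omega⟩
    · simp only [Finset.mem_filter, Finset.mem_univ, true_and, Nat.even_iff]
      omega
  · simp only [Finset.coe_filter, Finset.mem_univ, true_and, Set.mem_ofPred_eq] at hx ⊢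
    refine ⟨?_, by have := hs x k hx.1 (Nat.odd_iff.2 hk) (by omega); omega⟩
    rw [Nat.even_iff, hp x, ← Nat.even_iff]
    exact hx.1


theorem IsStaircasePerm.apply_eq_self_of_even (h : IsStaircasePerm ℓ) {k : Fin N}
    (hk : Even ((k : ℕ) + 1)) (hkN : (k : ℕ) + 4 ≤ N) : ℓ k = k := by
  have hle := h.2.1.val_apply_le_of_even h.1 hk hkN
  have hk' : Even ((ℓ k : ℕ) + 1) := by rwa [Nat.even_iff, h.1 k, ← Nat.even_iff]
  have hge := h.symm.2.1.val_apply_le_of_even h.symm.1 hk' (by omega)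
  rw [Equiv.symm_apply_apply] at hge
  exact Fin.ext (le_antisymm hle hge)

theorem IsStaircasePerm.apply_eq_self_of_odd (h : IsStaircasePerm ℓ) {k : Fin N}
    (hk : Odd ((k : ℕ) + 1)) (hk4 : 4 ≤ (k : ℕ)) : ℓ k = k := by
  have hge := h.2.1.le_val_apply_of_odd h.1 hk hk4
  have hk' : Odd ((ℓ k : ℕ) + 1) := by rwa [Nat.odd_iff, h.1 k, ← Nat.odd_iff]
  have hle := h.symm.2.1.le_val_apply_of_odd h.symm.1 hk' (by omega)
  rw [Equiv.symm_apply_apply] at hle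
  exact Fin.ext (le_antisymm hle hge)

theorem IsStaircasePerm.apply_mem_bottom_pair (h : IsStaircasePerm ℓ) (hN : 3 ≤ N) (z : Fin N)
    (hz : z = ⟨0, by omega⟩ ∨ z = ⟨2, by omega⟩) :
    ℓ z = ⟨0, by omega⟩ ∨ ℓ z = ⟨2, by omega⟩ := by
  simp only [Fin.ext_iff] at hz ⊢
  by_contra hne
  have hp := h.1 z
  have hfix := h.apply_eq_self_of_odd (k := ℓ z) (by rw [Nat.odd_iff]; omega) (by omega)
  have := congrArg Fin.val (ℓ.injective hfix)
  omega

-- `2 * (N / 2)` is the largest even number `≤ N`; its index in `Fin N` is one less.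
theorem IsStaircasePerm.apply_mem_top_pair (h : IsStaircasePerm ℓ) (hN : 4 ≤ N) (z : Fin N)
    (hz : z = ⟨2 * (N / 2) - 1, by omega⟩ ∨ z = ⟨2 * (N / 2) - 3, by omega⟩) :
    ℓ z = ⟨2 * (N / 2) - 1, by omega⟩ ∨ ℓ z = ⟨2 * (N / 2) - 3, by omega⟩ := by
  simp only [Fin.ext_iff] at hz ⊢
  by_contra hne
  have hp := h.1 z
  have hfix := h.apply_eq_self_of_even (k := ℓ z) (by rw [Nat.even_iff]; omega) (by omega)
  have := congrArg Fin.val (ℓ.injective hfix)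
  omega

theorem IsStaircasePerm.eq_of_iff {a b : Equiv.Perm (Fin N)} (ha : IsStaircasePerm a)
    (hb : IsStaircasePerm b) (hN : 4 ≤ N)
    (hbot : a ⟨0, by omega⟩ = ⟨0, by omega⟩ ↔ b ⟨0, by omega⟩ = ⟨0, by omega⟩)
    (htop : a ⟨2 * (N / 2) - 1, by omega⟩ = ⟨2 * (N / 2) - 1, by omega⟩ ↔
      b ⟨2 * (N / 2) - 1, by omega⟩ = ⟨2 * (N / 2) - 1, by omega⟩) :
    a = b := by
  ext1 k
  by_cases hkbot : k = ⟨0, by omega⟩ ∨ k = ⟨2, by omega⟩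
  · exact Equiv.Perm.apply_eq_of_mapsTo_pair (ha.apply_mem_bottom_pair (by omega))
      (hb.apply_mem_bottom_pair (by omega)) hbot hkbot
  by_cases hktop : k = ⟨2 * (N / 2) - 1, by omega⟩ ∨ k = ⟨2 * (N / 2) - 3, by omega⟩
  · exact Equiv.Perm.apply_eq_of_mapsTo_pair (ha.apply_mem_top_pair hN)
      (hb.apply_mem_top_pair hN) htop hktop
  simp only [Fin.ext_iff] at hkbot hktop
  rcases Nat.even_or_odd ((k : ℕ) + 1) with hk | hk
  · have hkN : (k : ℕ) + 4 ≤ N := by rw [Nat.even_iff] at hk; omega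
    rw [ha.apply_eq_self_of_even hk hkN, hb.apply_eq_self_of_even hk hkN]
  · have hk4 : 4 ≤ (k : ℕ) := by rw [Nat.odd_iff] at hk; omega
    rw [ha.apply_eq_self_of_odd hk hk4, hb.apply_eq_self_of_odd hk hk4]

theorem ncard_setOf_isStaircasePerm_le_four (hN : 4 ≤ N) :
    {ℓ : Equiv.Perm (Fin N) | IsStaircasePerm ℓ}.ncard ≤ 4 := by
  let bottom : Fin N := ⟨0, by omega⟩
  let top : Fin N := ⟨2 * (N / 2) - 1, by omega⟩
  have hinj : Set.InjOn (fun ℓ => (decide (ℓ bottom = bottom), decide (ℓ top = top)))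
      {ℓ : Equiv.Perm (Fin N) | IsStaircasePerm ℓ} := fun a ha b hb hab => by
    simp only [Prod.mk.injEq, decide_eq_decide] at hab
    exact ha.eq_of_iff hb hN hab.1 hab.2
  calc _ ≤ (Set.univ : Set (Bool × Bool)).ncard :=
        Set.ncard_le_ncard_of_injOn _ (fun _ _ => Set.mem_univ _) hinj Set.finite_univ
    _ = 4 := by simp [Set.ncard_univ]

/-- The four-to-one argument: a parity-preserving permutation `ℓ` of `{1,…,N}`
(`N ≥ 8`, coded by `Fin N` with index `k` standing for `(k : ℕ) + 1`) such that
whenever `k, ℓ(k)` are even, `k', ℓ(k')` are odd and `k' ≥ k + 3` one has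
`ℓ(k') ≥ ℓ(k) + 3`, and the same for `ℓ⁻¹`, fixes every even number of index
`≤ N - 4` and every odd number other than `1` and `3`; moreover there are at
most `4` such permutations. -/
theorem staircase_perm_four_to_one (N : ℕ) (hN : 8 ≤ N) (ℓ : Equiv.Perm (Fin N))
    (hpar : ∀ k : Fin N, ((ℓ k : ℕ) + 1) % 2 = ((k : ℕ) + 1) % 2)
    (hfwd : ∀ k k' : Fin N, Even ((k : ℕ) + 1) → Odd ((k' : ℕ) + 1) →
      (k' : ℕ) + 1 ≥ (k : ℕ) + 1 + 3 → (ℓ k' : ℕ) + 1 ≥ (ℓ k : ℕ) + 1 + 3)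
    (hbwd : ∀ k k' : Fin N, Even ((k : ℕ) + 1) → Odd ((k' : ℕ) + 1) →
      (k' : ℕ) + 1 ≥ (k : ℕ) + 1 + 3 → (ℓ.symm k' : ℕ) + 1 ≥ (ℓ.symm k : ℕ) + 1 + 3) :
    ((∀ k : Fin N, Even ((k : ℕ) + 1) → (k : ℕ) + 1 ≤ N - 4 → ℓ k = k) ∧
      (∀ k : Fin N, Odd ((k : ℕ) + 1) → (k : ℕ) + 1 ≠ 1 → (k : ℕ) + 1 ≠ 3 → ℓ k = k)) ∧
    Set.ncard {ℓ' : Equiv.Perm (Fin N) |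
      (∀ k : Fin N, ((ℓ' k : ℕ) + 1) % 2 = ((k : ℕ) + 1) % 2) ∧
      (∀ k k' : Fin N, Even ((k : ℕ) + 1) → Odd ((k' : ℕ) + 1) →
        (k' : ℕ) + 1 ≥ (k : ℕ) + 1 + 3 → (ℓ' k' : ℕ) + 1 ≥ (ℓ' k : ℕ) + 1 + 3) ∧
      (∀ k k' : Fin N, Even ((k : ℕ) + 1) → Odd ((k' : ℕ) + 1) →
        (k' : ℕ) + 1 ≥ (k : ℕ) + 1 + 3 → (ℓ'.symm k' : ℕ) + 1 ≥ (ℓ'.symm k : ℕ) + 1 + 3)} ≤ 4 := by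
  have hℓ : IsStaircasePerm ℓ := ⟨hpar, hfwd, hbwd⟩
  refine ⟨⟨fun k hk hkN => hℓ.apply_eq_self_of_even hk (by omega),
    fun k hk h1 h3 => hℓ.apply_eq_self_of_odd hk ?_⟩, ncard_setOf_isStaircasePerm_le_four (by omega)⟩
  rw [Nat.odd_iff] at hk
  omega
end

section
/- (No Helly property for piercing pairs of intervals, N = 3 case generalizable) There exist N ≥ 3 pairs of closed intervals (A_i, B_i), with A_i ⊆ [0,1] on one line and B_i ⊆ [0,1] on another, such that there is no pair of points (x, y) ∈ [0,1]² with (x ∈ A_i or y ∈ B_i) for all i = 1,…,N, yet for every proper subset S ⊊ {1,…,N} there exists a pair of points (x, y) with (x ∈ A_i or y ∈ B_i) for all i ∈ S. -/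
open Set

/-!
With unit `1/n`, pair `k` consists of the intervals `L k = [1/n, k/n]` and
`U k = [(k+2)/n, 1]`, the lower one on the `y`-line for even `k` and on the `x`-line for odd `k`
(the empty `L 0` and `U (n-1)` are replaced by `{0}`). The diagonal point `((j+1)/n, (j+1)/n)`
lies in `L k ∪ U k` for every `k ≠ j`, so it pierces every pair but the `j`-th.
Reading a point `(x, y)` as the alternating sequence `z = (y, x, y, x, …)`, pair `k` asks for
`z k ∈ L k` or `z (k+1) ∈ U k`, so `z k > k/n` forces `z (k+1) ≥ (k+2)/n`. Pairs 1 and 2 rule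
out `y = 0`; from `y > 0` the coordinates climb the staircase until the last pair can no longer
be pierced.
-/

namespace Staircase

def IsUnitSubIcc (s : Set ℝ) : Prop :=
  ∃ p q : ℝ, 0 ≤ p ∧ p ≤ q ∧ q ≤ 1 ∧ s = Icc p q

theorem isUnitSubIcc_zero : IsUnitSubIcc {0} :=
  ⟨0, 0, le_rfl, le_rfl, zero_le_one, (Icc_self 0).symm⟩

noncomputable def lower (n k : ℕ) : Set ℝ :=
  if k = 0 then {0} else Icc (1 / (n : ℝ)) (k / n)

noncomputable def upper (n k : ℕ) : Set ℝ :=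
  if k + 2 ≤ n then Icc ((k + 2 : ℝ) / n) 1 else {0}

variable {n k : ℕ}

theorem isUnitSubIcc_lower (hk : k ≤ n) : IsUnitSubIcc (lower n k) := by
  unfold lower
  split_ifs with hk0
  · exact isUnitSubIcc_zero
  · refine ⟨_, _, by positivity, ?_, ?_, rfl⟩
    · gcongr
      exact_mod_cast Nat.one_le_iff_ne_zero.2 hk0
    · exact div_le_one_of_le₀ (by exact_mod_cast hk) n.cast_nonneg

theorem isUnitSubIcc_upper : IsUnitSubIcc (upper n k) := by
  unfold upper
  split_ifs with hk
  · refine ⟨_, _, by positivity, ?_, le_rfl, rfl⟩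
    exact div_le_one_of_le₀ (by exact_mod_cast hk) n.cast_nonneg
  · exact isUnitSubIcc_zero

theorem lower_subset_Iic : lower n k ⊆ Iic ((k : ℝ) / n) := by
  unfold lower
  split_ifs with hk
  · simp [hk]
  · exact Icc_subset_Iic_self

theorem lower_subset_Ici (hk : k ≠ 0) : lower n k ⊆ Ici (1 / (n : ℝ)) := by
  simp only [lower, if_neg hk]
  exact Icc_subset_Ici_self

theorem lower_one : lower n 1 = {1 / (n : ℝ)} := by
  simp [lower]

theorem upper_subset_Ici (hk : k + 2 ≤ n) : upper n k ⊆ Ici (((k : ℝ) + 2) / n) := by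
  simp only [upper, if_pos hk]
  exact Icc_subset_Ici_self

theorem upper_of_lt (hk : n < k + 2) : upper n k = {0} := by
  simp [upper, hk.not_ge]

theorem one_div_notMem_upper (hn : 0 < n) : 1 / (n : ℝ) ∉ upper n k := by
  have hn' : (0 : ℝ) < n := by exact_mod_cast hn
  intro h
  by_cases hk : k + 2 ≤ n
  · have h2 : ((k : ℝ) + 2) / n ≤ 1 / n := upper_subset_Ici hk h
    have : (k : ℝ) + 2 ≤ 1 := (div_le_div_iff_of_pos_right hn').1 h2
    linarith [k.cast_nonneg (α := ℝ)]
  · rw [upper_of_lt (not_le.1 hk), mem_singleton_iff] at h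
    exact (one_div_pos.2 hn').ne' h

theorem div_mem_lower {m : ℕ} (hm : 1 ≤ m) (hmk : m ≤ k) : (m : ℝ) / n ∈ lower n k := by
  rw [lower, if_neg (by omega)]
  constructor <;> gcongr
  exact_mod_cast hm

theorem div_mem_upper {m : ℕ} (hkm : k + 2 ≤ m) (hmn : m ≤ n) : (m : ℝ) / n ∈ upper n k := by
  rw [upper, if_pos (by omega)]
  refine ⟨?_, div_le_one_of_le₀ (by exact_mod_cast hmn) n.cast_nonneg⟩
  gcongr
  exact_mod_cast hkm

theorem mem_lower_or_mem_upper {j : ℕ} (hjk : j ≠ k) (hj : j < n) :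
    ((j : ℝ) + 1) / n ∈ lower n k ∨ ((j : ℝ) + 1) / n ∈ upper n k := by
  rw [← Nat.cast_succ]
  rcases hjk.lt_or_gt with hlt | hgt
  · exact .inl (div_mem_lower (by omega) hlt)
  · exact .inr (div_mem_upper (by omega) hj)

def Pierced (n : ℕ) (z : ℕ → ℝ) (k : ℕ) : Prop :=
  z k ∈ lower n k ∨ z (k + 1) ∈ upper n k

noncomputable def xInterval (n k : ℕ) : Set ℝ :=
  if Even k then upper n k else lower n k

noncomputable def yInterval (n k : ℕ) : Set ℝ :=
  if Even k then lower n k else upper n k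

theorem isUnitSubIcc_xInterval (hk : k ≤ n) : IsUnitSubIcc (xInterval n k) := by
  unfold xInterval
  split_ifs
  exacts [isUnitSubIcc_upper, isUnitSubIcc_lower hk]

theorem isUnitSubIcc_yInterval (hk : k ≤ n) : IsUnitSubIcc (yInterval n k) := by
  unfold yInterval
  split_ifs
  exacts [isUnitSubIcc_lower hk, isUnitSubIcc_upper]

theorem mem_xInterval_or_mem_yInterval_iff {t : ℝ} :
    t ∈ xInterval n k ∨ t ∈ yInterval n k ↔ t ∈ lower n k ∨ t ∈ upper n k := by
  unfold xInterval yInterval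
  split_ifs
  exacts [or_comm, Iff.rfl]

theorem mem_xInterval_or_mem_yInterval_iff_pierced {x y : ℝ} :
    x ∈ xInterval n k ∨ y ∈ yInterval n k ↔ Pierced n (fun i => if Even i then y else x) k := by
  rcases Nat.even_or_odd k with hk | hk
  · simp [Pierced, xInterval, yInterval, hk, Nat.even_add_one, or_comm]
  · simp [Pierced, xInterval, yInterval, Nat.not_even_iff_odd.2 hk, Nat.even_add_one]

variable {z : ℕ → ℝ}

theorem div_lt_of_pierced (h0 : 0 < z 0) (hk : k + 1 ≤ n) (h : ∀ i < k, Pierced n z i) :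
    (k : ℝ) / n < z k := by
  induction k with
  | zero => simpa using h0
  | succ k ih =>
    have hn : (0 : ℝ) < n := by exact_mod_cast (show 0 < n by omega)
    have hzk := ih (by omega) fun i hi => h i (by omega)
    have hup : z (k + 1) ∈ upper n k :=
      (h k k.lt_succ_self).resolve_left fun hl => (lower_subset_Iic hl).not_gt hzk
    have hge : ((k : ℝ) + 2) / n ≤ z (k + 1) := upper_subset_Ici (by omega) hup
    calc ((k + 1 : ℕ) : ℝ) / n < ((k : ℝ) + 2) / n := by push_cast; gcongr; norm_num
      _ ≤ z (k + 1) := hge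

theorem pos_of_pierced_one_two (hz : ∀ k, z (k + 2) = z k) (hn : 3 ≤ n) (h0 : 0 ≤ z 0)
    (h1 : Pierced n z 1) (h2 : Pierced n z 2) : 0 < z 0 := by
  have hn' : (0 : ℝ) < n := by exact_mod_cast (show 0 < n by omega)
  refine h0.lt_of_ne' fun hz0 => ?_
  have hz2 : z 2 = 0 := by rw [hz 0, hz0]
  have hz1 : z 1 = 1 / n := by
    refine mem_singleton_iff.1 (lower_one ▸ h1.resolve_right fun hu => ?_)
    have : (((1 : ℕ) : ℝ) + 2) / n ≤ z 2 := upper_subset_Ici (by omega) hu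
    rw [hz2] at this
    exact this.not_gt (by positivity)
  rcases h2 with hl | hu
  · have : 1 / (n : ℝ) ≤ z 2 := lower_subset_Ici two_ne_zero hl
    rw [hz2] at this
    exact this.not_gt (by positivity)
  · rw [hz 1, hz1] at hu
    exact one_div_notMem_upper (by omega) hu

theorem not_forall_pierced (hz : ∀ k, z (k + 2) = z k) (hn : 3 ≤ n) (h0 : 0 ≤ z 0) :
    ¬ ∀ k < n, Pierced n z k := by
  intro h
  have hpos := pos_of_pierced_one_two hz hn h0 (h 1 (by omega)) (h 2 (by omega))
  have hlast := div_lt_of_pierced (k := n - 1) hpos (by omega) fun i hi => h i (by omega)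
  have hprev := div_lt_of_pierced (k := n - 2) hpos (by omega) fun i hi => h i (by omega)
  rcases h (n - 1) (by omega) with hl | hu
  · exact (lower_subset_Iic hl).not_gt hlast
  · rw [show n - 1 + 1 = n - 2 + 2 by omega, hz, upper_of_lt (by omega),
      mem_singleton_iff] at hu
    rw [hu] at hprev
    exact hprev.not_ge (by positivity)

end Staircase

/-- No Helly property for piercing pairs of intervals: for every `N ≥ 3` there
are pairs of closed subintervals `(A i, B i)` of `[0,1]` such that no pair of
points `(x, y) ∈ [0,1]²` pierces all of them (i.e. satisfies `x ∈ A i ∨ y ∈ B i`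
for every `i`), while for every proper subset `S` of the index set some pair of
points pierces all the pairs indexed by `S`. -/
theorem no_helly_for_piercing :
    ∀ N : ℕ, 3 ≤ N → ∃ A B : Fin N → Set ℝ,
      (∀ i, ∃ p q : ℝ, 0 ≤ p ∧ p ≤ q ∧ q ≤ 1 ∧ A i = Icc p q) ∧
      (∀ i, ∃ p q : ℝ, 0 ≤ p ∧ p ≤ q ∧ q ≤ 1 ∧ B i = Icc p q) ∧
      (¬ ∃ x ∈ Icc (0 : ℝ) 1, ∃ y ∈ Icc (0 : ℝ) 1, ∀ i, x ∈ A i ∨ y ∈ B i) ∧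
      (∀ S : Finset (Fin N), S ≠ Finset.univ →
        ∃ x ∈ Icc (0 : ℝ) 1, ∃ y ∈ Icc (0 : ℝ) 1, ∀ i ∈ S, x ∈ A i ∨ y ∈ B i) := by
  intro N hN
  refine ⟨fun i => Staircase.xInterval N i, fun i => Staircase.yInterval N i,
    fun i => Staircase.isUnitSubIcc_xInterval i.is_lt.le,
    fun i => Staircase.isUnitSubIcc_yInterval i.is_lt.le, ?_, ?_⟩
  · rintro ⟨x, -, y, hy, h⟩
    refine Staircase.not_forall_pierced (z := fun i => if Even i then y else x)
      (by simp [Nat.even_add]) hN hy.1 fun k hk => ?_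
    exact Staircase.mem_xInterval_or_mem_yInterval_iff_pierced.1 (h ⟨k, hk⟩)
  · intro S hS
    obtain ⟨j, hj⟩ := not_forall.1 (mt Finset.eq_univ_iff_forall.2 hS)
    have hdiag : ((j : ℝ) + 1) / N ∈ Icc (0 : ℝ) 1 :=
      ⟨by positivity, div_le_one_of_le₀ (by exact_mod_cast j.is_lt) N.cast_nonneg⟩
    refine ⟨_, hdiag, _, hdiag, fun i hi => ?_⟩
    exact Staircase.mem_xInterval_or_mem_yInterval_iff.2
      (Staircase.mem_lower_or_mem_upper (fun hji => hj (Fin.ext hji ▸ hi)) j.is_lt)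
end
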